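/- arXiv:1406.0811 — 2 statements merged into one kernel-verified Lean document; each statement's English description precedes it below -/
import Mathlib

section
/- Let D > 0, let k : [0,D] → ℝ be continuous with k(s) ≥ 0 for all s, and let f : [0,D] → ℝ be twice continuously differentiable with f''(s) + k(s)·f(s) = 0 on [0,D], f(0) = 0, f'(0) = 1, f(s) ≥ 0 on [0,D], and ∫₀ᴰ k(τ)·f(τ) dτ ≤ 2. Set L = 2π·f(D). Then 2π·∫₀ᴰ f(s) ds ≤ π·D²/2 + L·D/2 − L²/(8π). -/
open Real Set intervalIntegral

/-- Main area–diameter estimate in the rotationally symmetric case: for the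
profile `f` of a rotationally symmetric surface of non-negative curvature `k`
with total curvature `2π ∫₀ᴰ k f ≤ 4π`, its area `2π ∫₀ᴰ f` satisfies
`2π ∫₀ᴰ f ≤ π D²/2 + L D/2 - L²/(8π)` where `L = 2π f(D)`. -/
theorem stmt_9 (D : ℝ) (hD : 0 < D) (k f f' f'' : ℝ → ℝ)
    (hk_cont : ContinuousOn k (Icc 0 D))
    (hk_nonneg : ∀ s ∈ Icc 0 D, 0 ≤ k s)
    (hf' : ∀ s ∈ Icc 0 D, HasDerivAt f (f' s) s)
    (hf'' : ∀ s ∈ Icc 0 D, HasDerivAt f' (f'' s) s)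
    (hf''_cont : ContinuousOn f'' (Icc 0 D))
    (hode : ∀ s ∈ Icc 0 D, f'' s + k s * f s = 0)
    (hf0 : f 0 = 0) (hf'0 : f' 0 = 1)
    (hf_nonneg : ∀ s ∈ Icc 0 D, 0 ≤ f s)
    (htotal : (∫ τ in (0:ℝ)..D, k τ * f τ) ≤ 2)
    (L : ℝ) (hLdef : L = 2 * π * f D) :
    2 * π * (∫ s in (0:ℝ)..D, f s) ≤
      π * D ^ 2 / 2 + L * D / 2 - L ^ 2 / (8 * π) := by
  have hπ := Real.pi_pos
  have huIcc : uIcc (0:ℝ) D = Icc 0 D := uIcc_of_le hD.le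
  have hfc : ContinuousOn f (Icc 0 D) := fun x hx =>
    (hf' x hx).continuousAt.continuousWithinAt
  have hf'c : ContinuousOn f' (Icc 0 D) := fun x hx =>
    (hf'' x hx).continuousAt.continuousWithinAt
  -- f' is antitone on [0, D]
  have hanti : AntitoneOn f' (Icc 0 D) := by
    apply antitoneOn_of_deriv_nonpos (convex_Icc 0 D) hf'c
    · intro x hx
      rw [interior_Icc] at hx
      exact (hf'' x (Ioo_subset_Icc_self hx)).differentiableAt.differentiableWithinAt
    · intro x hx
      rw [interior_Icc] at hx
      have hx' := Ioo_subset_Icc_self hx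
      rw [(hf'' x hx').deriv]
      have := hode x hx'
      nlinarith [hk_nonneg x hx', hf_nonneg x hx']
  -- f'(D) ≥ -1 via FTC
  have hint_f'' : IntervalIntegrable f'' MeasureTheory.volume 0 D := by
    apply ContinuousOn.intervalIntegrable
    rwa [huIcc]
  have hFTC : (∫ s in (0:ℝ)..D, f'' s) = f' D - f' 0 := by
    apply intervalIntegral.integral_eq_sub_of_hasDerivAt
    · intro x hx
      rw [huIcc] at hx
      exact hf'' x hx
    · exact hint_f''
  have hcongr : (∫ s in (0:ℝ)..D, f'' s) = ∫ s in (0:ℝ)..D, -(k s * f s) := by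
    apply intervalIntegral.integral_congr
    intro x hx
    rw [huIcc] at hx
    have := hode x hx
    simp only
    linarith
  have hintkf : IntervalIntegrable (fun s => k s * f s) MeasureTheory.volume 0 D := by
    apply ContinuousOn.intervalIntegrable
    rw [huIcc]
    exact hk_cont.mul hfc
  have hf'D : -1 ≤ f' D := by
    have : (∫ s in (0:ℝ)..D, -(k s * f s)) = -(∫ τ in (0:ℝ)..D, k τ * f τ) := by
      rw [intervalIntegral.integral_neg]
    rw [this] at hcongr
    rw [hcongr] at hFTC
    linarith [hFTC, htotal]
  -- f s ≤ s on [0, D]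
  have hle1 : ∀ s ∈ Icc (0:ℝ) D, f s ≤ s := by
    have hanti2 : AntitoneOn (fun s => f s - s) (Icc 0 D) := by
      apply antitoneOn_of_deriv_nonpos (convex_Icc 0 D) (hfc.sub continuousOn_id)
      · intro x hx
        rw [interior_Icc] at hx
        exact ((hf' x (Ioo_subset_Icc_self hx)).sub (hasDerivAt_id x)).differentiableAt.differentiableWithinAt
      · intro x hx
        rw [interior_Icc] at hx
        have hx' := Ioo_subset_Icc_self hx
        rw [((hf' x hx').sub (hasDerivAt_id x)).deriv]
        have h1 : f' x ≤ f' 0 := hanti (left_mem_Icc.mpr hD.le) hx' hx'.1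
        rw [hf'0] at h1
        linarith
    intro s hs
    have := hanti2 (left_mem_Icc.mpr hD.le) hs hs.1
    simp only [hf0] at this
    linarith
  -- f s ≤ f D + D - s on [0, D]
  have hle2 : ∀ s ∈ Icc (0:ℝ) D, f s ≤ f D + D - s := by
    have hmono : MonotoneOn (fun s => f s + s) (Icc 0 D) := by
      apply monotoneOn_of_deriv_nonneg (convex_Icc 0 D) (hfc.add continuousOn_id)
      · intro x hx
        rw [interior_Icc] at hx
        exact ((hf' x (Ioo_subset_Icc_self hx)).add (hasDerivAt_id x)).differentiableAt.differentiableWithinAt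
      · intro x hx
        rw [interior_Icc] at hx
        have hx' := Ioo_subset_Icc_self hx
        rw [((hf' x hx').add (hasDerivAt_id x)).deriv]
        have h1 : f' D ≤ f' x := hanti hx' (right_mem_Icc.mpr hD.le) hx'.2
        linarith
    intro s hs
    have := hmono hs (right_mem_Icc.mpr hD.le) hs.2
    simp only at this
    linarith
  set c := f D with hc
  have hc0 : 0 ≤ c := hf_nonneg D (right_mem_Icc.mpr hD.le)
  have hcD : c ≤ D := by
    have := hle1 D (right_mem_Icc.mpr hD.le); linarith
  set m := (c + D) / 2 with hm
  have hm0 : (0:ℝ) ≤ m := by positivity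
  have hmD : m ≤ D := by simp only [hm]; linarith
  -- integrability pieces
  have hint1 : IntervalIntegrable f MeasureTheory.volume 0 m := by
    apply ContinuousOn.intervalIntegrable
    apply hfc.mono
    rw [uIcc_of_le hm0]
    exact Icc_subset_Icc le_rfl hmD
  have hint2 : IntervalIntegrable f MeasureTheory.volume m D := by
    apply ContinuousOn.intervalIntegrable
    apply hfc.mono
    rw [uIcc_of_le hmD]
    exact Icc_subset_Icc hm0 le_rfl
  have hsplit : (∫ s in (0:ℝ)..m, f s) + (∫ s in m..D, f s) = ∫ s in (0:ℝ)..D, f s :=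
    intervalIntegral.integral_add_adjacent_intervals hint1 hint2
  have hb1 : (∫ s in (0:ℝ)..m, f s) ≤ ∫ s in (0:ℝ)..m, s := by
    apply intervalIntegral.integral_mono_on hm0 hint1 intervalIntegral.intervalIntegrable_id
    intro s hs
    exact hle1 s ⟨hs.1, hs.2.trans hmD⟩
  have hb2 : (∫ s in m..D, f s) ≤ ∫ s in m..D, (c + D - s) := by
    apply intervalIntegral.integral_mono_on hmD hint2
    · exact (_root_.intervalIntegrable_const).sub intervalIntegral.intervalIntegrable_id
    · intro s hs
      exact hle2 s ⟨hm0.trans hs.1, hs.2⟩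
  have he1 : (∫ s in (0:ℝ)..m, s) = m ^ 2 / 2 := by
    rw [integral_id]; ring
  have he2 : (∫ s in m..D, (c + D - s)) = (c + D) * (D - m) - (D ^ 2 - m ^ 2) / 2 := by
    rw [integral_sub _root_.intervalIntegrable_const intervalIntegral.intervalIntegrable_id,
      integral_const, integral_id]
    simp [smul_eq_mul]
    ring
  have hbound : (∫ s in (0:ℝ)..D, f s) ≤ D ^ 2 / 4 + c * D / 2 - c ^ 2 / 4 := by
    rw [← hsplit]
    have := hb1.trans_eq he1
    have := hb2.trans_eq he2
    have hmval : m = (c + D) / 2 := hm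
    nlinarith
  rw [hLdef]
  have h2π : (0:ℝ) < 2 * π := by linarith
  have := mul_le_mul_of_nonneg_left hbound h2π.le
  have heq : 2 * π * (D ^ 2 / 4 + c * D / 2 - c ^ 2 / 4)
      = π * D ^ 2 / 2 + 2 * π * c * D / 2 - (2 * π * c) ^ 2 / (8 * π) := by
    field_simp
    ring
  linarith [this, heq.le, heq.ge]
end

section
/- Let d ≥ 2 be an integer, let D > 0, and let f : [0,D] → ℝ be a continuous function with 0 ≤ f(s) ≤ s and f(s) ≤ D − s for every s ∈ [0,D]. Then ∫₀ᴰ f(s)^{d−1} ds ≤ D^d / (2^{d−1}·d). -/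
open Real Set intervalIntegral

-- The tent `min s (D - s)` is symmetric about `D / 2` and equals `s` on `[0, D / 2]`,
-- so its `n`-th power integrates to twice `∫₀^{D/2} sⁿ`.
theorem integral_min_sub_pow (n : ℕ) {D : ℝ} (hD : 0 ≤ D) :
    ∫ s in (0 : ℝ)..D, min s (D - s) ^ n = D ^ (n + 1) / (2 ^ n * (n + 1)) := by
  have hcont : Continuous fun s : ℝ => min s (D - s) ^ n := by fun_prop
  have left_half : ∫ s in (0 : ℝ)..D / 2, min s (D - s) ^ n = ∫ s in (0 : ℝ)..D / 2, s ^ n := by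
    refine integral_congr fun s hs => ?_
    rw [uIcc_of_le (by linarith)] at hs
    simp only [min_eq_left (show s ≤ D - s by linarith [hs.2])]
  have right_half :
      ∫ s in D / 2..D, min s (D - s) ^ n = ∫ s in (0 : ℝ)..D / 2, min s (D - s) ^ n := by
    have h := integral_comp_sub_left (fun s => min s (D - s) ^ n) D (a := 0) (b := D / 2)
    simp only [sub_sub_cancel, min_comm, sub_zero, show D - D / 2 = D / 2 by ring] at h
    exact h.symm
  rw [← integral_add_adjacent_intervals (hcont.intervalIntegrable 0 (D / 2))
    (hcont.intervalIntegrable (D / 2) D), right_half, left_half,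
    integral_pow, zero_pow n.succ_ne_zero, sub_zero, div_pow, pow_succ 2 n]
  field_simp
  ring

/-- Core integral estimate in the higher-dimensional Alexandrov inequality:
if `0 ≤ f(s) ≤ s` and `f(s) ≤ D - s` on `[0,D]` and `d ≥ 2`, then
`∫₀ᴰ f^(d-1) ≤ D^d / (2^(d-1) d)`. -/
theorem stmt_11 (d : ℕ) (hd : 2 ≤ d) (D : ℝ) (hD : 0 < D) (f : ℝ → ℝ)
    (hf_cont : ContinuousOn f (Icc 0 D))
    (hf_nonneg : ∀ s ∈ Icc 0 D, 0 ≤ f s)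
    (hf_le : ∀ s ∈ Icc 0 D, f s ≤ s)
    (hf_le' : ∀ s ∈ Icc 0 D, f s ≤ D - s) :
    (∫ s in (0:ℝ)..D, f s ^ (d - 1)) ≤ D ^ d / (2 ^ (d - 1) * d) := by
  obtain ⟨n, rfl⟩ : ∃ n, d = n + 1 := ⟨d - 1, by omega⟩
  rw [Nat.add_sub_cancel, Nat.cast_succ, ← integral_min_sub_pow n hD.le]
  refine integral_mono_on hD.le ((hf_cont.pow n).intervalIntegrable_of_Icc hD.le)
    ((by fun_prop : Continuous fun s : ℝ => min s (D - s) ^ n).intervalIntegrable 0 D)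
    fun s hs => ?_
  exact pow_le_pow_left₀ (hf_nonneg s hs) (le_min (hf_le s hs) (hf_le' s hs)) n
end
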